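/- arXiv:quant-ph/0702196 — 3 statements merged into one kernel-verified Lean document; each statement's English description precedes it below -/
import Mathlib

section
/- Dilworth's Theorem: any finite partially ordered set S whose largest antichain has size k can be partitioned into k disjoint chains. -/
open Finset

section Dilworth
variable {α : Type*} [PartialOrder α]

open scoped Classical in
noncomputable def pwidth (S : Finset α) : ℕ :=
  (S.powerset.filter (fun A : Finset α => IsAntichain (· ≤ ·) (A : Set α))).sup Finset.card

open scoped Classical in
lemma card_le_pwidth {S A : Finset α} (hAS : A ⊆ S)
    (hA : IsAntichain (· ≤ ·) (A : Set α)) : A.card ≤ pwidth S :=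
  Finset.le_sup (by simp [Finset.mem_filter, Finset.mem_powerset, hAS, hA])

open scoped Classical in
lemma pwidth_le {S : Finset α} {k : ℕ}
    (h : ∀ A ⊆ S, IsAntichain (· ≤ ·) (A : Set α) → A.card ≤ k) : pwidth S ≤ k := by
  apply Finset.sup_le
  intro B hB
  simp only [Finset.mem_filter, Finset.mem_powerset] at hB
  exact h B hB.1 hB.2

lemma pwidth_mono {S T : Finset α} (h : S ⊆ T) : pwidth S ≤ pwidth T :=
  pwidth_le fun A hA hanti => card_le_pwidth (hA.trans h) hanti

open scoped Classical in
lemma exists_pwidth_antichain (S : Finset α) :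
    ∃ A ⊆ S, IsAntichain (· ≤ ·) (A : Set α) ∧ A.card = pwidth S := by
  obtain ⟨A, hA, hcard⟩ := Finset.exists_mem_eq_sup
    (S.powerset.filter (fun A : Finset α => IsAntichain (· ≤ ·) (A : Set α)))
    ⟨∅, Finset.mem_filter.mpr ⟨Finset.empty_mem_powerset S, by simp [IsAntichain]⟩⟩ Finset.card
  simp only [Finset.mem_filter, Finset.mem_powerset] at hA
  exact ⟨A, hA.1, hA.2, hcard.symm⟩

/-- A nonempty finite chain has a greatest element. -/
lemma chain_exists_greatest {c : Finset α} (hne : c.Nonempty)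
    (hc : IsChain (· ≤ ·) (c : Set α)) : ∃ m ∈ c, ∀ x ∈ c, x ≤ m := by
  obtain ⟨m, hm, hmax⟩ := Set.Finite.exists_maximalFor id (c : Set α) c.finite_toSet
    (by exact_mod_cast hne)
  refine ⟨m, hm, fun x hx => ?_⟩
  rcases eq_or_ne x m with rfl | hxm
  · exact le_refl x
  · rcases hc (Finset.mem_coe.mpr hx) hm hxm with h | h
    · exact h
    · exact hmax (Finset.mem_coe.mpr hx) h

theorem dilworth_finset [DecidableEq α] (S : Finset α) :
    ∃ C : Finset (Finset α), C.card = pwidth S ∧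
      (∀ c ∈ C, c.Nonempty) ∧ (∀ c ∈ C, c ⊆ S) ∧
      (∀ c ∈ C, IsChain (· ≤ ·) (c : Set α)) ∧
      (∀ c ∈ C, ∀ d ∈ C, c ≠ d → Disjoint c d) ∧
      (∀ x ∈ S, ∃ c ∈ C, x ∈ c) := by
  classical
  induction S using Finset.strongInduction with
  | _ S IH =>
  rcases S.eq_empty_or_nonempty with rfl | hSne
  · have hw0 : pwidth (∅ : Finset α) = 0 :=
      Nat.le_antisymm (pwidth_le fun A hA _ => by simpa [Finset.subset_empty.mp hA])
        (Nat.zero_le _)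
    exact ⟨∅, by simp [hw0], by simp, by simp, by simp, by simp, by simp⟩
  -- pick a maximal element a of S
  obtain ⟨a, haS, hamax⟩ := Set.Finite.exists_maximalFor id (S : Set α) S.finite_toSet
    (by exact_mod_cast hSne)
  replace hamax : ∀ b ∈ S, a ≤ b → a = b := fun b hb h => le_antisymm h (hamax (Finset.mem_coe.mpr hb) h)
  replace haS : a ∈ S := Finset.mem_coe.mp haS
  have haS' : a ∉ S.erase a := Finset.notMem_erase a S
  -- apply IH to S.erase a
  obtain ⟨C', hC'card, hne', hsub', hchain', hdisj', hcov'⟩ :=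
    IH (S.erase a) (Finset.erase_ssubset haS)
  -- bounds on pwidth S
  have hwge : pwidth (S.erase a) ≤ pwidth S := pwidth_mono (Finset.erase_subset a S)
  have hwle : pwidth S ≤ pwidth (S.erase a) + 1 := by
    apply pwidth_le
    intro A hAS hanti
    have hsub : A.erase a ⊆ S.erase a := fun x hx =>
      Finset.mem_erase.mpr ⟨(Finset.mem_erase.mp hx).1, hAS (Finset.mem_erase.mp hx).2⟩
    have h1 : (A.erase a).card ≤ pwidth (S.erase a) :=
      card_le_pwidth hsub (hanti.subset (by exact_mod_cast Finset.erase_subset a A))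
    have h2 : A.card ≤ (A.erase a).card + 1 := by
      by_cases haA : a ∈ A
      · rw [Finset.card_erase_of_mem haA]; omega
      · rw [Finset.erase_eq_of_notMem haA]; exact Nat.le_succ _
    omega
  rcases lt_or_eq_of_le hwge with hw | hw
  · -- easy case : pwidth S = pwidth (S.erase a) + 1 ; add the chain {a}
    have hwS : pwidth S = pwidth (S.erase a) + 1 := by omega
    have hnotmem : ({a} : Finset α) ∉ C' := fun h => haS' (hsub' _ h (Finset.mem_singleton_self a))
    refine ⟨insert {a} C', ?_, ?_, ?_, ?_, ?_, ?_⟩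
    · rw [Finset.card_insert_of_notMem hnotmem, hC'card, hwS]
    · intro c hc
      rcases Finset.mem_insert.mp hc with rfl | hc
      · exact ⟨a, Finset.mem_singleton_self a⟩
      · exact hne' c hc
    · intro c hc
      rcases Finset.mem_insert.mp hc with rfl | hc
      · simpa using haS
      · exact (hsub' c hc).trans (Finset.erase_subset a S)
    · intro c hc
      rcases Finset.mem_insert.mp hc with rfl | hc
      · rw [Finset.coe_singleton]; exact Set.subsingleton_singleton.isChain
      · exact hchain' c hc
    · intro c hc d hd hcd
      rcases Finset.mem_insert.mp hc with rfl | hc <;> rcases Finset.mem_insert.mp hd with rfl | hd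
      · exact absurd rfl hcd
      · exact Finset.disjoint_singleton_left.mpr fun h => haS' (hsub' d hd h)
      · exact Finset.disjoint_singleton_right.mpr fun h => haS' (hsub' c hc h)
      · exact hdisj' c hc d hd hcd
    · intro x hx
      by_cases hxa : x = a
      · exact ⟨{a}, Finset.mem_insert_self _ _, by simp [hxa]⟩
      · obtain ⟨c, hc, hxc⟩ := hcov' x (Finset.mem_erase.mpr ⟨hxa, hx⟩)
        exact ⟨c, Finset.mem_insert_of_mem hc, hxc⟩
  · -- hard case : pwidth S = pwidth (S.erase a)
    have hwS : pwidth S = pwidth (S.erase a) := hw.symm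
    have hk'pos : 0 < pwidth (S.erase a) := by
      have h1 : ({a} : Finset α).card ≤ pwidth S :=
        card_le_pwidth (by simpa using haS)
          (by rw [Finset.coe_singleton]; exact Set.subsingleton_singleton.isAntichain _)
      simp only [Finset.card_singleton] at h1
      omega
    -- the covering-chain function g on S.erase a
    have hgg : ∀ x, ∃ c, x ∈ S.erase a → (c ∈ C' ∧ x ∈ c) := by
      intro x
      by_cases hx : x ∈ S.erase a
      · obtain ⟨c, hc, hxc⟩ := hcov' x hx
        exact ⟨c, fun _ => ⟨hc, hxc⟩⟩
      · exact ⟨∅, fun h => absurd h hx⟩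
    choose g hg using hgg
    -- every maximum antichain of S.erase a meets every chain of C'
    have hmeet : ∀ A : Finset α, A ⊆ S.erase a → IsAntichain (· ≤ ·) (A : Set α) →
        A.card = pwidth (S.erase a) → ∀ c ∈ C', ∃ x ∈ A, x ∈ c := by
      intro A hAsub hAanti hAcard c hc
      have hinj : Set.InjOn g (A : Set α) := by
        intro x hx y hy hxy
        by_contra hne
        have hxg := hg x (hAsub hx)
        have hyg := hg y (hAsub hy)
        rcases hchain' _ hxg.1 (Finset.mem_coe.mpr hxg.2)
            (Finset.mem_coe.mpr (hxy ▸ hyg.2)) hne with h | h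
        · exact hAanti hx hy hne h
        · exact hAanti hy hx (Ne.symm hne) h
      have himg : A.image g = C' := by
        apply Finset.eq_of_subset_of_card_le
        · intro c hc'
          obtain ⟨x, hx, rfl⟩ := Finset.mem_image.mp hc'
          exact (hg x (hAsub hx)).1
        · rw [Finset.card_image_of_injOn hinj, hAcard, hC'card]
      rw [← himg] at hc
      obtain ⟨x, hx, rfl⟩ := Finset.mem_image.mp hc
      exact ⟨x, hx, (hg x (hAsub hx)).2⟩
    -- top elements of max antichains in each chain
    set T : Finset α → Finset α := fun c => c.filter (fun x => ∃ A : Finset α,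
      A ⊆ S.erase a ∧ IsAntichain (· ≤ ·) (A : Set α) ∧ A.card = pwidth (S.erase a) ∧ x ∈ A)
      with hT
    have hM : ∀ c, ∃ m, c ∈ C' → (m ∈ T c ∧ ∀ x ∈ T c, x ≤ m) := by
      intro c
      by_cases hc : c ∈ C'
      · have hTne : (T c).Nonempty := by
          obtain ⟨A, hA1, hA2, hA3⟩ := exists_pwidth_antichain (S.erase a)
          obtain ⟨x, hxA, hxc⟩ := hmeet A hA1 hA2 hA3 c hc
          exact ⟨x, Finset.mem_filter.mpr ⟨hxc, A, hA1, hA2, hA3, hxA⟩⟩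
        have hTchain : IsChain (· ≤ ·) ((T c : Finset α) : Set α) :=
          IsChain.mono (by exact_mod_cast Finset.filter_subset _ _) (hchain' c hc)
        obtain ⟨mm, hmm, hmax⟩ := chain_exists_greatest hTne hTchain
        exact ⟨mm, fun _ => ⟨hmm, hmax⟩⟩
      · exact ⟨a, fun h => absurd h hc⟩
    choose m hm using hM
    have hmc : ∀ c ∈ C', m c ∈ c := fun c hc => (Finset.mem_filter.mp ((hm c) hc).1).1
    have hmA : ∀ c ∈ C', ∃ A : Finset α, A ⊆ S.erase a ∧ IsAntichain (· ≤ ·) (A : Set α) ∧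
        A.card = pwidth (S.erase a) ∧ m c ∈ A := fun c hc => (Finset.mem_filter.mp ((hm c) hc).1).2
    have hmtop : ∀ c ∈ C', ∀ x ∈ T c, x ≤ m c := fun c hc => ((hm c) hc).2
    have hmS' : ∀ c ∈ C', m c ∈ S.erase a := fun c hc => hsub' c hc (hmc c hc)
    -- pairwise incomparability of the m c's
    have hpair : ∀ c ∈ C', ∀ d ∈ C', c ≠ d → ¬ m c ≤ m d := by
      intro c hc d hd hcd hle
      obtain ⟨A, hA1, hA2, hA3, hmA'⟩ := hmA d hd
      obtain ⟨x, hxA, hxc⟩ := hmeet A hA1 hA2 hA3 c hc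
      have hxT : x ∈ T c := Finset.mem_filter.mpr ⟨hxc, A, hA1, hA2, hA3, hxA⟩
      have hxle : x ≤ m d := le_trans (hmtop c hc x hxT) hle
      have hxne : x ≠ m d := by
        intro h
        exact Finset.disjoint_left.mp (hdisj' c hc d hd hcd) hxc (h ▸ hmc d hd)
      exact hA2 (Finset.mem_coe.mpr hxA) (Finset.mem_coe.mpr hmA') hxne hxle
    have hanotle : ∀ c ∈ C', ¬ a ≤ m c := by
      intro c hc h
      have hmS : m c ∈ S := Finset.mem_of_mem_erase (hmS' c hc)
      exact haS' ((hamax (m c) hmS h) ▸ hmS' c hc)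
    -- find a chain whose top is below a
    have hc0 : ∃ c₀ ∈ C', m c₀ ≤ a := by
      by_contra hno
      push_neg at hno
      have haB : a ∉ C'.image m := by
        intro h
        obtain ⟨c, hc, hmc'⟩ := Finset.mem_image.mp h
        exact haS' (hmc' ▸ hmS' c hc)
      have hinjm : Set.InjOn m (C' : Set (Finset α)) := by
        intro c hc d hd h
        by_contra hne
        exact Finset.disjoint_left.mp (hdisj' c hc d hd hne) (hmc c hc) (h ▸ hmc d hd)
      have hBcard : (insert a (C'.image m)).card = pwidth (S.erase a) + 1 := by
        rw [Finset.card_insert_of_notMem haB, Finset.card_image_of_injOn hinjm, hC'card]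
      have hBsub : insert a (C'.image m) ⊆ S := by
        intro x hx
        rcases Finset.mem_insert.mp hx with rfl | hx
        · exact haS
        · obtain ⟨c, hc, rfl⟩ := Finset.mem_image.mp hx
          exact Finset.mem_of_mem_erase (hmS' c hc)
      have hBanti : IsAntichain (· ≤ ·) ((insert a (C'.image m) : Finset α) : Set α) := by
        intro x hx y hy hne hxy
        simp only [Finset.coe_insert, Set.mem_insert_iff, Finset.coe_image, Set.mem_image,
          Finset.mem_coe] at hx hy
        rcases hx with rfl | ⟨c, hc, rfl⟩ <;> rcases hy with h' | ⟨d, hd, rfl⟩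
        · exact hne h'.symm
        · exact hanotle d hd hxy
        · exact hno c hc (h' ▸ hxy)
        · rcases eq_or_ne c d with rfl | hcd
          · exact hne rfl
          · exact hpair c hc d hd hcd hxy
      have := card_le_pwidth hBsub hBanti
      omega
    obtain ⟨c₀, hc₀, hc₀le⟩ := hc0
    -- the chain K through a
    set K : Finset α := insert a (c₀.filter (· ≤ m c₀)) with hK
    have haK : a ∈ K := Finset.mem_insert_self _ _
    have hKsub : K ⊆ S := by
      intro x hx
      rcases Finset.mem_insert.mp hx with rfl | hx
      · exact haS
      · exact Finset.mem_of_mem_erase (hsub' c₀ hc₀ (Finset.mem_filter.mp hx).1)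
    have hKchain : IsChain (· ≤ ·) (K : Set α) := by
      intro x hx y hy hne
      simp only [hK, Finset.coe_insert, Set.mem_insert_iff, Finset.coe_filter,
        Set.mem_setOf_eq, Finset.mem_coe] at hx hy
      rcases hx with rfl | ⟨hxc, hxle⟩ <;> rcases hy with h' | ⟨hyc, hyle⟩
      · exact absurd h'.symm hne
      · exact Or.inr (hyle.trans hc₀le)
      · exact Or.inl (h' ▸ (hxle.trans hc₀le))
      · exact hchain' c₀ hc₀ (Finset.mem_coe.mpr hxc) (Finset.mem_coe.mpr hyc) hne
    -- the remainder R and its width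
    set R : Finset α := S \ K with hR
    have hRsub' : R ⊆ S.erase a := by
      intro x hx
      rw [hR, Finset.mem_sdiff] at hx
      exact Finset.mem_erase.mpr ⟨fun h => hx.2 (h ▸ haK), hx.1⟩
    have hRss : R ⊂ S := by
      refine ⟨Finset.sdiff_subset, fun hcon => ?_⟩
      have := hcon haS
      rw [hR, Finset.mem_sdiff] at this
      exact this.2 haK
    have hwR_le : pwidth R ≤ pwidth (S.erase a) - 1 := by
      by_contra h
      push_neg at h
      have h1 : pwidth R ≤ pwidth (S.erase a) := pwidth_mono hRsub'
      have h2 : pwidth R = pwidth (S.erase a) := by omega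
      obtain ⟨A, hA1, hA2, hA3⟩ := exists_pwidth_antichain R
      rw [h2] at hA3
      obtain ⟨x, hxA, hxc⟩ := hmeet A (hA1.trans hRsub') hA2 hA3 c₀ hc₀
      have hxT : x ∈ T c₀ :=
        Finset.mem_filter.mpr ⟨hxc, A, hA1.trans hRsub', hA2, hA3, hxA⟩
      have hxK : x ∈ K := Finset.mem_insert_of_mem
        (Finset.mem_filter.mpr ⟨hxc, hmtop c₀ hc₀ x hxT⟩)
      have hxR := hA1 hxA
      rw [hR, Finset.mem_sdiff] at hxR
      exact hxR.2 hxK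
    have hwR_ge : pwidth (S.erase a) - 1 ≤ pwidth R := by
      obtain ⟨A, hA1, hA2, hA3⟩ := exists_pwidth_antichain (S.erase a)
      obtain ⟨x, hxA, hxc⟩ := hmeet A hA1 hA2 hA3 c₀ hc₀
      have hsubR : A.erase x ⊆ R := by
        intro y hy
        obtain ⟨hyx, hyA⟩ := Finset.mem_erase.mp hy
        rw [hR, Finset.mem_sdiff]
        refine ⟨Finset.mem_of_mem_erase (hA1 hyA), fun hyK => ?_⟩
        rcases Finset.mem_insert.mp hyK with rfl | hyf
        · exact haS' (hA1 hyA)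
        · have hyc : y ∈ c₀ := (Finset.mem_filter.mp hyf).1
          rcases hchain' c₀ hc₀ (Finset.mem_coe.mpr hyc) (Finset.mem_coe.mpr hxc) hyx with h | h
          · exact hA2 (Finset.mem_coe.mpr hyA) (Finset.mem_coe.mpr hxA) hyx h
          · exact hA2 (Finset.mem_coe.mpr hxA) (Finset.mem_coe.mpr hyA) (Ne.symm hyx) h
      have hcard : (A.erase x).card = pwidth (S.erase a) - 1 := by
        rw [Finset.card_erase_of_mem hxA, hA3]
      exact hcard ▸ card_le_pwidth hsubR
        (hA2.subset (by exact_mod_cast Finset.erase_subset x A))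
    -- apply IH to R
    obtain ⟨C'', hC''card, hne'', hsub'', hchain'', hdisj'', hcov''⟩ := IH R hRss
    have hC''w : C''.card = pwidth (S.erase a) - 1 := by
      rw [hC''card]; omega
    have hKnot : K ∉ C'' := by
      intro h
      have := hsub'' K h haK
      rw [hR, Finset.mem_sdiff] at this
      exact this.2 haK
    refine ⟨insert K C'', ?_, ?_, ?_, ?_, ?_, ?_⟩
    · rw [Finset.card_insert_of_notMem hKnot, hC''w, hwS]; omega
    · intro c hc
      rcases Finset.mem_insert.mp hc with rfl | hc
      · exact ⟨a, haK⟩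
      · exact hne'' c hc
    · intro c hc
      rcases Finset.mem_insert.mp hc with rfl | hc
      · exact hKsub
      · exact (hsub'' c hc).trans Finset.sdiff_subset
    · intro c hc
      rcases Finset.mem_insert.mp hc with rfl | hc
      · exact hKchain
      · exact hchain'' c hc
    · intro c hc d hd hcd
      have key : ∀ d ∈ C'', Disjoint K d := by
        intro d hd
        rw [Finset.disjoint_left]
        intro x hxK hxd
        have := hsub'' d hd hxd
        rw [hR, Finset.mem_sdiff] at this
        exact this.2 hxK
      rcases Finset.mem_insert.mp hc with rfl | hc <;> rcases Finset.mem_insert.mp hd with rfl | hd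
      · exact absurd rfl hcd
      · exact key d hd
      · exact (key c hc).symm
      · exact hdisj'' c hc d hd hcd
    · intro x hx
      by_cases hxK : x ∈ K
      · exact ⟨K, Finset.mem_insert_self _ _, hxK⟩
      · obtain ⟨c, hc, hxc⟩ := hcov'' x (by rw [hR, Finset.mem_sdiff]; exact ⟨hx, hxK⟩)
        exact ⟨c, Finset.mem_insert_of_mem hc, hxc⟩

end Dilworth

/-- Dilworth's Theorem: any finite poset whose largest antichain has size `k`
can be partitioned into `k` disjoint chains. -/
theorem dilworth {α : Type*} [Fintype α] [PartialOrder α] (k : ℕ)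
    (hub : ∀ A : Finset α, IsAntichain (· ≤ ·) (A : Set α) → A.card ≤ k)
    (hex : ∃ A : Finset α, IsAntichain (· ≤ ·) (A : Set α) ∧ A.card = k) :
    ∃ C : Finset (Finset α), C.card = k ∧
      (∀ c ∈ C, (c : Finset α).Nonempty) ∧
      (∀ c ∈ C, IsChain (· ≤ ·) (c : Set α)) ∧
      (∀ x : α, ∃! c, c ∈ C ∧ x ∈ c) := by
  classical
  have hwuniv : pwidth (Finset.univ : Finset α) = k := by
    obtain ⟨A, hA1, hA2⟩ := hex
    exact le_antisymm (pwidth_le fun B _ hB => hub B hB)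
      (hA2 ▸ card_le_pwidth (Finset.subset_univ A) hA1)
  obtain ⟨C, h1, h2, _h3, h4, h5, h6⟩ := dilworth_finset (Finset.univ : Finset α)
  refine ⟨C, by rw [h1, hwuniv], h2, h4, fun x => ?_⟩
  obtain ⟨c, hc, hxc⟩ := h6 x (Finset.mem_univ x)
  refine ⟨c, ⟨hc, hxc⟩, ?_⟩
  rintro d ⟨hd, hxd⟩
  by_contra hne
  exact Finset.disjoint_left.mp (h5 d hd c hc hne) hxd hxc
end

section
/- In a finite forest-like poset T with n ≥ 2 elements, there exists an element x whose weight wt(x) = |{z : z ≤ x}| satisfies wt(x) ≤ ⌈n/2⌉ and such that either x is maximal, or the element p covering x satisfies wt(p) > ⌈n/2⌉. -/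
/-- In a finite forest-like poset with `n ≥ 2` elements, there is an element `x`
of weight at most `⌈n/2⌉` such that either `x` is maximal, or the element covering
`x` has weight greater than `⌈n/2⌉`. -/
theorem forest_central_element {α : Type*} [Fintype α] [PartialOrder α]
    (hforest : ∀ a : α, {b | a ⋖ b}.Subsingleton)
    (hn : 2 ≤ Fintype.card α) :
    ∃ x : α, {z | z ≤ x}.ncard ≤ (Fintype.card α + 1) / 2 ∧
      (IsMax x ∨ ∀ p, x ⋖ p → (Fintype.card α + 1) / 2 < {z | z ≤ p}.ncard) := by
  set m := (Fintype.card α + 1) / 2 with hm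
  have hne : Nonempty α := Fintype.card_pos_iff.mp (by omega)
  obtain ⟨a, -, ha⟩ : ∃ a ∈ (Finset.univ : Finset α), ∀ x ∈ (Finset.univ : Finset α), ¬ x < a := by
    obtain ⟨a, ha⟩ := Finset.exists_minimal (Finset.univ_nonempty (α := α))
    exact ⟨a, ha.1, fun x hx h => h.not_ge (ha.2 hx h.le)⟩
  have haS : {z | z ≤ a}.ncard ≤ m := by
    have heq : {z | z ≤ a} = {a} := by
      ext z
      simp only [Set.mem_setOf_eq, Set.mem_singleton_iff]
      constructor
      · intro h
        by_contra hne'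
        exact ha z (Finset.mem_univ z) (lt_of_le_of_ne h hne')
      · rintro rfl; exact le_rfl
    rw [heq, Set.ncard_singleton]
    omega
  obtain ⟨x, hxS, hxmax⟩ : ∃ x ∈ {x : α | {z | z ≤ x}.ncard ≤ m},
      ∀ p ∈ {x : α | {z | z ≤ x}.ncard ≤ m}, id x ≤ id p → id x = id p := by
    obtain ⟨x, hx⟩ := Set.Finite.exists_maximalFor id
      {x : α | {z | z ≤ x}.ncard ≤ m} (Set.toFinite _) ⟨a, haS⟩
    exact ⟨x, hx.1, fun p hp h => le_antisymm h (hx.2 hp h)⟩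
  refine ⟨x, hxS, Or.inr ?_⟩
  intro p hp
  by_contra hle
  push_neg at hle
  have := hxmax p hle (le_of_lt hp.lt)
  simp only [id] at this
  exact hp.lt.ne this
end

section
/- If a finite forest-like poset T has an element x chosen with maximal weight subject to wt(x) ≤ ⌈|T|/2⌉, and x is covered by p, then the set G of elements covered by p has total weight (sum of wt(y) over y ∈ G) at least |T|/2. -/
/-- In a finite forest-like poset, the set of elements above any element is a chain. -/
theorem forest_comparable {α : Type*} [Fintype α] [PartialOrder α]
    (hforest : ∀ a : α, {b | a ⋖ b}.Subsingleton) :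
    ∀ a b c : α, a ≤ b → a ≤ c → b ≤ c ∨ c ≤ b := by
  classical
  intro a
  induction a using WellFoundedGT.induction with
  | _ a IH =>
    intro b c hab hac
    rcases eq_or_lt_of_le hab with rfl | hab'
    · exact Or.inl hac
    rcases eq_or_lt_of_le hac with rfl | hac'
    · exact Or.inr hab
    obtain ⟨a₁, h1, h1b⟩ := exists_covBy_le_of_lt hab'
    obtain ⟨a₂, h2, h2c⟩ := exists_covBy_le_of_lt hac'
    have : a₁ = a₂ := hforest a h1 h2
    subst this
    exact IH a₁ h1.lt b c h1b h2c

open scoped Classical in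
/-- In a finite forest-like poset, if `x` has maximal weight subject to
`wt x ≤ ⌈n/2⌉` and `x` is covered by `p`, then the total weight of the set `G` of
elements covered by `p` is at least `n/2`. -/
theorem forest_siblings_weight {α : Type*} [Fintype α] [PartialOrder α]
    (hforest : ∀ a : α, {b | a ⋖ b}.Subsingleton) (x p : α)
    (hwt : {z | z ≤ x}.ncard ≤ (Fintype.card α + 1) / 2)
    (hmaxwt : ∀ y : α, {z | z ≤ y}.ncard ≤ (Fintype.card α + 1) / 2 →
      {z | z ≤ y}.ncard ≤ {z | z ≤ x}.ncard)
    (hcov : x ⋖ p) :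
    Fintype.card α ≤ 2 * ∑ y ∈ Finset.univ.filter (· ⋖ p), {z | z ≤ y}.ncard := by
  set G : Finset α := Finset.univ.filter (· ⋖ p) with hG
  -- the down-sets of the elements of `G` are pairwise disjoint
  have hdisj : ∀ y1 ∈ G, ∀ y2 ∈ G, y1 ≠ y2 →
      Disjoint ({z | z ≤ y1}.toFinset) ({z | z ≤ y2}.toFinset) := by
    intro y1 h1 y2 h2 hne
    simp only [hG, Finset.mem_filter] at h1 h2
    rw [Finset.disjoint_left]
    intro z hz1 hz2
    simp only [Set.mem_toFinset, Set.mem_setOf_eq] at hz1 hz2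
    rcases forest_comparable hforest z y1 y2 hz1 hz2 with h | h
    · rcases eq_or_lt_of_le h with rfl | hlt
      · exact hne rfl
      · exact h1.2.2 hlt h2.2.lt
    · rcases eq_or_lt_of_le h with rfl | hlt
      · exact hne rfl
      · exact h2.2.2 hlt h1.2.lt
  -- their union is the set of elements strictly below `p`
  have hunion : G.biUnion (fun y => ({z | z ≤ y} : Set α).toFinset)
      = ({z | z < p} : Set α).toFinset := by
    ext z
    simp only [Finset.mem_biUnion, Set.mem_toFinset, Set.mem_setOf_eq, hG,
      Finset.mem_filter, Finset.mem_univ, true_and]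
    constructor
    · rintro ⟨y, hy, hzy⟩
      exact lt_of_le_of_lt hzy hy.lt
    · intro hz
      obtain ⟨y, hzy, hy⟩ := exists_le_covBy_of_lt hz
      exact ⟨y, hy, hzy⟩
  have hsum : ∑ y ∈ G, {z | z ≤ y}.ncard = ({z | z < p} : Set α).ncard := by
    rw [Set.ncard_eq_toFinset_card', ← hunion, Finset.card_biUnion hdisj]
    exact Finset.sum_congr rfl fun y _ => (Set.ncard_eq_toFinset_card' _)
  -- the weight of `p`
  have hins : ({z | z ≤ p} : Set α) = insert p {z | z < p} := by
    ext z; simp [le_iff_lt_or_eq, or_comm]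
  have hwtp : ({z | z ≤ p} : Set α).ncard = ({z | z < p} : Set α).ncard + 1 := by
    rw [hins, Set.ncard_insert_of_notMem (by simp) (Set.toFinite _)]
  have hxltp : ({z | z ≤ x} : Set α).ncard < ({z | z ≤ p} : Set α).ncard := by
    apply Set.ncard_lt_ncard _ (Set.toFinite _)
    constructor
    · intro z hz; exact le_trans hz hcov.le
    · intro hsub
      exact absurd (hsub (le_refl p)) (not_le_of_gt hcov.lt)
  have hbig : (Fintype.card α + 1) / 2 < ({z | z ≤ p} : Set α).ncard := by
    by_contra h
    push_neg at h
    exact absurd (hmaxwt p h) (not_le_of_gt hxltp)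
  rw [hsum]
  omega
end
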